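/- For every real u > 0 with u ≠ 1, ∫₀^∞ x²/((x+1)³(xu+1)) dx = (u-1)^{-3} (log u - (u-1) + (u-1)²/2). -/

import Mathlib

/-!
Partial fractions in `v = u - 1` give an elementary antiderivative of the nonnegative integrand:
`log ((x u + 1) / (x + 1)) / v³` plus multiples of `(x + 1)⁻¹` and `(x + 1)⁻²`. As `x → ∞` the
rational terms vanish and the logarithm tends to `log u`, so the integral is `log u / v³` minus
the value of the antiderivative at `0`.
-/

open MeasureTheory Real Filter Topology Set

noncomputable def modifiedLogTwoAntideriv (u x : ℝ) : ℝ :=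
  (log (x * u + 1) - log (x + 1)) / (u - 1) ^ 3 - (u - 2) / (u - 1) ^ 2 / (x + 1)
    + 1 / (2 * (u - 1)) / (x + 1) ^ 2

lemma hasDerivAt_modifiedLogTwoAntideriv {u x : ℝ} (hu1 : u ≠ 1) (hx1 : x + 1 ≠ 0)
    (hxu : x * u + 1 ≠ 0) :
    HasDerivAt (modifiedLogTwoAntideriv u) (x ^ 2 / ((x + 1) ^ 3 * (x * u + 1))) x := by
  have hv : u - 1 ≠ 0 := sub_ne_zero.mpr hu1
  have hlog₁ : HasDerivAt (fun x : ℝ => log (x * u + 1)) (u / (x * u + 1)) x := by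
    simpa using (((hasDerivAt_id x).mul_const u).add_const 1).log hxu
  have hlog₂ : HasDerivAt (fun x : ℝ => log (x + 1)) (1 / (x + 1)) x := by
    simpa using ((hasDerivAt_id x).add_const 1).log hx1
  have hF := (((hlog₁.sub hlog₂).div_const ((u - 1) ^ 3)).sub
    ((hasDerivAt_const x ((u - 2) / (u - 1) ^ 2)).div ((hasDerivAt_id x).add_const 1) hx1)).add
    ((hasDerivAt_const x (1 / (2 * (u - 1)))).div (((hasDerivAt_id x).add_const 1).pow 2)
      (pow_ne_zero 2 hx1))
  refine hF.congr_deriv ?_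
  simp only [id_eq, Pi.pow_apply, Nat.cast_ofNat, zero_mul, zero_sub, mul_one, pow_one,
    Nat.add_one_sub_one]
  have hux : u * x + 1 ≠ 0 := by rwa [mul_comm]
  field_simp
  ring

lemma tendsto_log_mul_add_one_sub_log_add_one {u : ℝ} (hu : 0 < u) :
    Tendsto (fun x => log (x * u + 1) - log (x + 1)) atTop (𝓝 (log u)) := by
  -- `(x u + 1) / (x + 1) = u + (1 - u) / (x + 1)`
  have hratio : Tendsto (fun x : ℝ => u + (1 - u) * (x + 1)⁻¹) atTop (𝓝 u) := by
    simpa using tendsto_const_nhds.add ((tendsto_inv_atTop_zero.comp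
      (tendsto_atTop_add_const_right _ 1 tendsto_id)).const_mul (1 - u))
  refine ((continuousAt_log hu.ne').tendsto.comp hratio).congr' ?_
  filter_upwards [eventually_gt_atTop 0] with x hx
  have hx1 : x + 1 ≠ 0 := by positivity
  rw [Function.comp_apply, ← log_div (by positivity) hx1]
  congr 1
  field_simp
  ring

lemma tendsto_modifiedLogTwoAntideriv {u : ℝ} (hu : 0 < u) :
    Tendsto (modifiedLogTwoAntideriv u) atTop (𝓝 (log u / (u - 1) ^ 3)) := by
  have hshift : Tendsto (fun x : ℝ => x + 1) atTop atTop :=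
    tendsto_atTop_add_const_right _ 1 tendsto_id
  have hlin := tendsto_const_nhds (x := (u - 2) / (u - 1) ^ 2).div_atTop hshift
  have hsq := tendsto_const_nhds (x := 1 / (2 * (u - 1))).div_atTop
    ((tendsto_pow_atTop two_ne_zero).comp hshift)
  have hF := (((tendsto_log_mul_add_one_sub_log_add_one hu).div_const ((u - 1) ^ 3)).sub
    hlin).add hsq
  rwa [sub_zero, add_zero] at hF

theorem modified_log_two (u : ℝ) (hu : 0 < u) (hu1 : u ≠ 1) :
    ∫ x in Set.Ioi (0:ℝ), x ^ 2 / ((x + 1) ^ 3 * (x * u + 1)) =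
      (Real.log u - (u - 1) + (u - 1) ^ 2 / 2) / (u - 1) ^ 3 := by
  have hv : u - 1 ≠ 0 := sub_ne_zero.mpr hu1
  rw [integral_Ioi_of_hasDerivAt_of_nonneg'
    (fun x (hx : 0 ≤ x) => hasDerivAt_modifiedLogTwoAntideriv hu1 (by positivity) (by positivity))
    (fun x (hx : 0 < x) => by positivity) (tendsto_modifiedLogTwoAntideriv hu)]
  simp only [modifiedLogTwoAntideriv, zero_mul, zero_add, log_one, sub_self, zero_div]
  field_simp
  ring
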